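/- For any two density matrices ρ and σ on an n-qubit system A and any single-qubit pure state |r⟩ on a qubit R, the trace distance D(ρ,σ) = (1/2)‖ρ−σ‖₁ equals the maximum over unitaries U on AR of Tr[(I_A ⊗ |0⟩⟨0|_R) U (ρ ⊗ |r⟩⟨r|) U†] − Tr[(I_A ⊗ |0⟩⟨0|_R) U (σ ⊗ |r⟩⟨r|) U†]. -/

import Mathlib

/-!
Write `Δ = ρ - σ = E diag(λ) E†` and complete `r` to a unitary `W` with `W |0⟩ = |r⟩`, so that
`Δ ⊗ |r⟩⟨r| = V diag(d) V†` with `V = E ⊗ W`, `d (i, 0) = λ i` and `d (i, 1) = 0`. For a unitary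
`U` the objective is `∑ k, c k * d k` with weights `c k = ∑ m, p m * |(U V) m k|² ∈ [0, 1]`, where
`p` is the diagonal of `I ⊗ |0⟩⟨0|`. Hence it is at most `∑ k, (d k)⁺ = ∑ i, (λ i)⁺`, which is
`‖Δ‖₁ / 2` because `Tr Δ = 0`. The bound is attained by `U = Π V†`, where the permutation `Π`
swaps `(i, 0)` and `(i, 1)` whenever `λ i ≤ 0`.
-/

open Matrix Kronecker
open scoped ComplexOrder

noncomputable def traceNorm {n : Type*} [Fintype n] [DecidableEq n] (H : Matrix n n ℂ) : ℝ :=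
  if h : H.IsHermitian then ∑ i, |h.eigenvalues i| else 0

noncomputable def traceDist {n : Type*} [Fintype n] [DecidableEq n] (ρ σ : Matrix n n ℂ) : ℝ :=
  traceNorm (ρ - σ) / 2

theorem Finset.sum_mul_le_sum_posPart {ι : Type*} (s : Finset ι) {c d : ι → ℝ}
    (hc : ∀ i ∈ s, c i ∈ Set.Icc 0 1) : ∑ i ∈ s, c i * d i ≤ ∑ i ∈ s, (d i)⁺ :=
  Finset.sum_le_sum fun i hi =>
    (mul_le_mul_of_nonneg_left (le_posPart (d i)) (hc i hi).1).trans
      (mul_le_of_le_one_left (posPart_nonneg (d i)) (hc i hi).2)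

theorem Matrix.sub_kronecker {R l m n p : Type*} [NonUnitalNonAssocRing R]
    (A B : Matrix l m R) (C : Matrix n p R) : (A - B) ⊗ₖ C = A ⊗ₖ C - B ⊗ₖ C := by
  ext
  simp [sub_mul]

theorem Matrix.kronecker_conj {R m n : Type*} [CommSemiring R] [StarRing R]
    [Fintype m] [Fintype n] (U₁ A : Matrix m m R) (U₂ B : Matrix n n R) :
    (U₁ * A * star U₁) ⊗ₖ (U₂ * B * star U₂) = (U₁ ⊗ₖ U₂) * (A ⊗ₖ B) * star (U₁ ⊗ₖ U₂) := by
  simp only [mul_kronecker_mul, star_eq_conjTranspose, conjTranspose_kronecker]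

section

variable {K : Type*} [Fintype K] [DecidableEq K]

theorem Matrix.sum_normSq_apply_eq_one {B : Matrix K K ℂ} (hB : B ∈ unitaryGroup K ℂ) (k : K) :
    ∑ m, Complex.normSq (B m k) = 1 := by
  have h := congr_fun₂ (mem_unitaryGroup_iff'.mp hB) k k
  simp only [mul_apply, star_apply, one_apply_eq, Complex.star_def,
    ← Complex.normSq_eq_conj_mul_self] at h
  exact_mod_cast h

theorem Matrix.sum_mul_normSq_apply_mem_Icc {p : K → ℝ} (hp : ∀ m, p m ∈ Set.Icc 0 1)
    {B : Matrix K K ℂ} (hB : B ∈ unitaryGroup K ℂ) (k : K) :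
    ∑ m, p m * Complex.normSq (B m k) ∈ Set.Icc 0 1 :=
  ⟨Finset.sum_nonneg fun m _ => mul_nonneg (hp m).1 (Complex.normSq_nonneg _),
    (sum_normSq_apply_eq_one hB k).symm ▸ Finset.sum_le_sum fun m _ =>
      mul_le_of_le_one_left (Complex.normSq_nonneg _) (hp m).2⟩

theorem Equiv.Perm.permMatrix_mem_unitaryGroup (π : Equiv.Perm K) :
    π.permMatrix ℂ ∈ unitaryGroup K ℂ := by
  rw [mem_unitaryGroup_iff, star_eq_conjTranspose, conjTranspose_permMatrix,
    ← permMatrix_mul, inv_mul_cancel, permMatrix_one]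

theorem Equiv.Perm.sum_mul_normSq_permMatrix_apply (p : K → ℝ) (π : Equiv.Perm K) (k : K) :
    ∑ m, p m * Complex.normSq (π.permMatrix ℂ m k) = p (π.symm k) := by
  simp [PEquiv.toMatrix_apply, ← Equiv.eq_symm_apply, apply_ite Complex.normSq]

theorem Matrix.trace_diagonal_mul_conj_diagonal (p d : K → ℝ) (B : Matrix K K ℂ) :
    (diagonal (fun k => (p k : ℂ)) * (B * diagonal (fun k => (d k : ℂ)) * star B)).trace =
      ((∑ k, (∑ m, p m * Complex.normSq (B m k)) * d k : ℝ) : ℂ) := by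
  have hdiag (k : K) : (star B * diagonal (fun k => (p k : ℂ)) * B) k k =
      ((∑ m, p m * Complex.normSq (B m k) : ℝ) : ℂ) := by
    rw [mul_apply]
    push_cast
    simp only [mul_diagonal, star_apply, Complex.star_def, Complex.normSq_eq_conj_mul_self]
    exact Finset.sum_congr rfl fun m _ => by ring
  rw [← Matrix.mul_assoc, ← Matrix.mul_assoc, trace_mul_comm, ← Matrix.mul_assoc,
    ← Matrix.mul_assoc]
  simp only [trace, diag_apply, mul_diagonal, hdiag]
  push_cast
  rfl

theorem isGreatest_trace_diagonal_mul_unitary_conj {p d : K → ℝ} (hp : ∀ k, p k ∈ Set.Icc 0 1)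
    {V : Matrix K K ℂ} (hV : V ∈ unitaryGroup K ℂ) (π : Equiv.Perm K)
    (hπ : ∀ k, p k * d (π k) = (d (π k))⁺) :
    IsGreatest {x : ℝ | ∃ U ∈ unitaryGroup K ℂ,
        (diagonal (fun k => (p k : ℂ)) *
          (U * (V * diagonal (fun k => (d k : ℂ)) * star V) * star U)).trace = (x : ℂ)}
      (∑ k, (d k)⁺) := by
  have hvalue (U : Matrix K K ℂ) :
      (diagonal (fun k => (p k : ℂ)) *
          (U * (V * diagonal (fun k => (d k : ℂ)) * star V) * star U)).trace =
        ((∑ k, (∑ m, p m * Complex.normSq ((U * V) m k)) * d k : ℝ) : ℂ) := by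
    rw [← trace_diagonal_mul_conj_diagonal, star_mul]
    simp only [Matrix.mul_assoc]
  constructor
  · refine ⟨π.permMatrix ℂ * star V,
      mul_mem π.permMatrix_mem_unitaryGroup (Unitary.star_mem hV), ?_⟩
    rw [hvalue, Matrix.mul_assoc, mem_unitaryGroup_iff'.mp hV, Matrix.mul_one,
      Complex.ofReal_inj]
    simp only [π.sum_mul_normSq_permMatrix_apply]
    rw [← Equiv.sum_comp π, ← Equiv.sum_comp π (fun k => (d k)⁺)]
    simp only [Equiv.symm_apply_apply, hπ]
  · rintro x ⟨U, hU, hx⟩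
    rw [hvalue, Complex.ofReal_inj] at hx
    exact hx ▸ Finset.sum_mul_le_sum_posPart _ fun k _ =>
      sum_mul_normSq_apply_mem_Icc hp (mul_mem hU hV) k

theorem traceNorm_eq_two_mul_sum_posPart {H : Matrix K K ℂ} (hH : H.IsHermitian)
    (htr : H.trace = 0) : traceNorm H = 2 * ∑ i, (hH.eigenvalues i)⁺ := by
  have hsum : ∑ i, hH.eigenvalues i = 0 := by
    simpa [htr] using (congrArg Complex.re hH.trace_eq_sum_eigenvalues).symm
  have habs (a : ℝ) : |a| = 2 * a⁺ - a := by
    linarith [posPart_add_negPart a, posPart_sub_negPart a]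
  rw [traceNorm, dif_pos hH]
  simp only [habs, Finset.sum_sub_distrib, ← Finset.mul_sum, hsum, sub_zero]

end

theorem exists_unitary_vecMulVec_eq {r : Fin 2 → ℂ} (hr : star r ⬝ᵥ r = 1) :
    ∃ W ∈ unitaryGroup (Fin 2) ℂ, vecMulVec r (star r) = W * single 0 0 1 * star W := by
  have hr' : starRingEnd ℂ (r 0) * r 0 + starRingEnd ℂ (r 1) * r 1 = 1 := by
    simpa [dotProduct, Fin.sum_univ_two] using hr
  refine ⟨!![r 0, -starRingEnd ℂ (r 1); r 1, starRingEnd ℂ (r 0)], ?_, ?_⟩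
  · rw [mem_unitaryGroup_iff]
    ext i j
    fin_cases i <;> fin_cases j <;>
      simp [mul_apply, Fin.sum_univ_two, star_apply] <;> first | linear_combination hr' | ring
  · rw [← diagonal_single]
    ext i j
    fin_cases i <;> fin_cases j <;>
      simp [mul_apply, Fin.sum_univ_two, vecMulVec_apply, vecMul_diagonal, star_apply]

theorem isGreatest_trace_one_kronecker_single_mul {ι : Type*} [Fintype ι] [DecidableEq ι]
    (μ : ι → ℝ) {V : Matrix (ι × Fin 2) (ι × Fin 2) ℂ} (hV : V ∈ unitaryGroup (ι × Fin 2) ℂ) :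
    IsGreatest {x : ℝ | ∃ U ∈ unitaryGroup (ι × Fin 2) ℂ,
        ((1 ⊗ₖ single 0 0 1) *
          (U * (V * (diagonal (fun i => (μ i : ℂ)) ⊗ₖ single 0 0 1) * star V) * star U)).trace =
          (x : ℂ)}
      (∑ i, (μ i)⁺) := by
  set e : Fin 2 → ℝ := Pi.single 0 1
  have hdiag (a : ι → ℝ) : diagonal (fun i => (a i : ℂ)) ⊗ₖ single 0 0 1 =
      diagonal (fun k => ((a k.1 * e k.2 : ℝ) : ℂ)) := by
    rw [← diagonal_single, diagonal_kronecker_diagonal]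
    congr 1
    ext ⟨i, j⟩
    fin_cases j <;> simp [e]
  have hP : (1 : Matrix ι ι ℂ) ⊗ₖ single 0 0 1 = diagonal (fun k => (e k.2 : ℂ)) := by
    simpa using hdiag 1
  have hsum : ∑ k : ι × Fin 2, (μ k.1 * e k.2)⁺ = ∑ i, (μ i)⁺ := by
    simp [Fintype.sum_prod_type, Fin.sum_univ_two, e]
  have he (j : Fin 2) : e j ∈ Set.Icc 0 1 := by fin_cases j <;> simp [e]
  let τ : ι → Equiv.Perm (Fin 2) := fun i => if 0 < μ i then 1 else Equiv.swap 0 1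
  rw [hP, hdiag, ← hsum]
  apply isGreatest_trace_diagonal_mul_unitary_conj (fun k => he k.2) hV
    (Equiv.prodShear (Equiv.refl ι) τ)
  rintro ⟨i, j⟩
  by_cases h : 0 < μ i <;> fin_cases j <;> simp [τ, e, h, le_of_lt, not_lt.mp]

/-- the trace distance `D(ρ,σ)` equals the maximum over unitaries `U` on `AR`
of the difference of the two single-qubit measurement outcomes. -/
theorem traceDist_eq_max_unitary_difference (n : ℕ)
    (ρ σ : Matrix (Fin (2 ^ n)) (Fin (2 ^ n)) ℂ)
    (hρ : ρ.PosSemidef) (hσ : σ.PosSemidef) (hρt : ρ.trace = 1) (hσt : σ.trace = 1)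
    (r : Fin 2 → ℂ) (hr : star r ⬝ᵥ r = 1) :
    IsGreatest {x : ℝ | ∃ U ∈ Matrix.unitaryGroup (Fin (2 ^ n) × Fin 2) ℂ,
        (((1 : Matrix (Fin (2 ^ n)) (Fin (2 ^ n)) ℂ) ⊗ₖ
            Matrix.single (0 : Fin 2) (0 : Fin 2) (1 : ℂ)) *
          (U * (ρ ⊗ₖ Matrix.vecMulVec r (star r)) * star U)).trace -
        (((1 : Matrix (Fin (2 ^ n)) (Fin (2 ^ n)) ℂ) ⊗ₖ
            Matrix.single (0 : Fin 2) (0 : Fin 2) (1 : ℂ)) *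
          (U * (σ ⊗ₖ Matrix.vecMulVec r (star r)) * star U)).trace = (x : ℂ)}
      (traceDist ρ σ) := by
  have hΔ : (ρ - σ).IsHermitian := hρ.1.sub hσ.1
  obtain ⟨W, hW, hrW⟩ := exists_unitary_vecMulVec_eq hr
  set E : Matrix (Fin (2 ^ n)) (Fin (2 ^ n)) ℂ := hΔ.eigenvectorUnitary.1
  have hΔr : (ρ - σ) ⊗ₖ vecMulVec r (star r) =
      (E ⊗ₖ W) * (diagonal (fun i => (hΔ.eigenvalues i : ℂ)) ⊗ₖ single 0 0 1) * star (E ⊗ₖ W) := by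
    rw [hrW, ← kronecker_conj]
    conv_lhs => rw [hΔ.spectral_theorem, Unitary.conjStarAlgAut_apply]
    rfl
  have hdist : traceDist ρ σ = ∑ i, (hΔ.eigenvalues i)⁺ := by
    rw [traceDist, traceNorm_eq_two_mul_sum_posPart hΔ (by rw [trace_sub, hρt, hσt, sub_self])]
    ring
  simp only [← trace_sub, ← mul_sub, ← sub_mul, ← sub_kronecker, hΔr, hdist]
  exact isGreatest_trace_one_kronecker_single_mul _
    (kronecker_mem_unitary hΔ.eigenvectorUnitary.2 hW)
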